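/- arXiv:2112.14427 — 3 statements merged into one kernel-verified Lean document; each statement's English description precedes it below -/
import Mathlib

section
/- For every real x ≥ 1, the cardinality of the set S(x) = {⌊x/n⌋ : 1 ≤ n ≤ x} equals 2√x + O(1); precisely, |#S(x) − 2√x| ≤ 2 for all x ≥ 1. -/
set_option maxHeartbeats 2000000 in
theorem floor_set_card_asymp (x : ℝ) (hx : 1 ≤ x) :
    |(((Finset.Icc 1 ⌊x⌋₊).image (fun n : ℕ => ⌊x / (n : ℝ)⌋₊)).card : ℝ)
      - 2 * Real.sqrt x| ≤ 2 := by
  have hx0 : (0:ℝ) < x := by linarith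
  set s := Real.sqrt x with hs
  have hs0' : 0 ≤ s := Real.sqrt_nonneg x
  have hss : s * s = x := Real.mul_self_sqrt hx0.le
  have hs1 : (1:ℝ) ≤ s := by nlinarith
  have hs0 : (0:ℝ) < s := by linarith
  set f : ℕ → ℕ := fun n => ⌊x / (n : ℝ)⌋₊ with hf
  set N := ⌊s⌋₊ with hNdef
  have hN1 : 1 ≤ N := Nat.le_floor (by exact_mod_cast hs1)
  have hNs : (N:ℝ) ≤ s := Nat.floor_le hs0.le
  have hsN : s < (N:ℝ) + 1 := Nat.lt_floor_add_one s
  have hN0 : (0:ℝ) < (N:ℝ) := by exact_mod_cast hN1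
  set M := ⌊x / ((N:ℝ)+1)⌋₊ with hMdef
  have hMle : (M:ℝ) ≤ x / ((N:ℝ)+1) := Nat.floor_le (by positivity)
  have hMgt : x / ((N:ℝ)+1) < (M:ℝ) + 1 := Nat.lt_floor_add_one _
  have hMle' : (M:ℝ) * ((N:ℝ)+1) ≤ x := by
    rw [← le_div_iff₀ (by positivity)]; exact hMle
  have hMgt' : x < ((M:ℝ)+1) * ((N:ℝ)+1) := by
    rw [← div_lt_iff₀ (by positivity)]; exact hMgt
  have hMN : M ≤ N := by
    have h2 : M < N + 1 := by
      rw [hMdef]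
      apply (Nat.floor_lt (by positivity)).mpr
      push_cast
      rw [div_lt_iff₀ (by positivity)]
      nlinarith
    omega
  -- anti-monotone
  have fmono : ∀ a b : ℕ, 1 ≤ a → a ≤ b → f b ≤ f a := by
    intro a b ha hab
    apply Nat.floor_le_floor
    have ha0 : (0:ℝ) < a := by exact_mod_cast ha
    have hab' : (a:ℝ) ≤ b := by exact_mod_cast hab
    gcongr
  -- strict step for n+1 ≤ N
  have fstep : ∀ n : ℕ, 1 ≤ n → n + 1 ≤ N → f (n+1) + 1 ≤ f n := by
    intro n hn hnN
    have hn0 : (0:ℝ) < (n:ℝ) := by exact_mod_cast hn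
    have hn1N : ((n:ℝ)+1) ≤ (N:ℝ) := by exact_mod_cast hnN
    have key : x / ((n:ℝ)+1) + 1 ≤ x / (n:ℝ) := by
      rw [div_add' _ _ _ (by positivity), div_le_div_iff₀ (by positivity) hn0]
      nlinarith
    apply Nat.le_floor
    have : ((f (n+1) : ℝ)) ≤ x / ((n:ℝ)+1) := by
      have := Nat.floor_le (show (0:ℝ) ≤ x / ((n:ℝ)+1) by positivity)
      simpa [hf] using this
    push_cast
    linarith
  -- strict anti on [1,N]
  have fanti : ∀ a b : ℕ, 1 ≤ a → a < b → b ≤ N → f b < f a := by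
    intro a b ha hab hbN
    have h1 : f b ≤ f (a+1) := fmono (a+1) b (by omega) (by omega)
    have h2 : f (a+1) + 1 ≤ f a := fstep a ha (by omega)
    omega
  set A := (Finset.Icc 1 N).image f with hA
  set B := Finset.Icc 1 M with hB
  -- f N > M
  have fNgtM : M < f N := by
    have key : (M:ℝ) + 1 ≤ x / (N:ℝ) := by
      rcases le_or_gt ((N:ℝ) * ((N:ℝ)+1)) x with h | h
      · have hMN' : (M:ℝ) ≤ N := by exact_mod_cast hMN
        rw [le_div_iff₀ hN0]; nlinarith
      · have : (M:ℝ) < (N:ℝ) := by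
          have : x / ((N:ℝ)+1) < (N:ℝ) := by rw [div_lt_iff₀ (by positivity)]; nlinarith
          linarith
        have : M < N := by exact_mod_cast this
        have : (M:ℝ) + 1 ≤ (N:ℝ) := by exact_mod_cast this
        rw [le_div_iff₀ hN0]; nlinarith
    have : M + 1 ≤ f N := Nat.le_floor (by push_cast; linarith)
    omega
  have hdisj : Disjoint A B := by
    rw [Finset.disjoint_left]
    intro a haA haB
    simp only [hA, Finset.mem_image, Finset.mem_Icc] at haA
    obtain ⟨n, ⟨hn1, hnN⟩, rfl⟩ := haA
    have : f N ≤ f n := fmono n N hn1 hnN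
    simp only [hB, Finset.mem_Icc] at haB
    omega
  have hNx : N ≤ ⌊x⌋₊ := Nat.le_floor (by nlinarith)
  -- image = A ∪ B
  have himage : (Finset.Icc 1 ⌊x⌋₊).image f = A ∪ B := by
    apply Finset.Subset.antisymm
    · intro a ha
      simp only [Finset.mem_image, Finset.mem_Icc] at ha
      obtain ⟨n, ⟨hn1, hnx⟩, rfl⟩ := ha
      rcases le_or_gt n N with h | h
      · exact Finset.mem_union_left _ (Finset.mem_image_of_mem f (Finset.mem_Icc.mpr ⟨hn1, h⟩))
      · apply Finset.mem_union_right
        have h1 : f n ≤ M := by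
          have : f n ≤ f (N+1) := fmono (N+1) n (by omega) h
          have he : f (N+1) = M := by simp [hf, hMdef]
          omega
        have h2 : 1 ≤ f n := by
          apply Nat.le_floor
          have hnx' : (n:ℝ) ≤ x := le_trans (by exact_mod_cast hnx) (Nat.floor_le hx0.le)
          have hn0 : (0:ℝ) < (n:ℝ) := by exact_mod_cast hn1
          rw [le_div_iff₀ hn0] -- (1:ℝ)*n ≤ x
          · push_cast; linarith
        exact Finset.mem_Icc.mpr ⟨h2, h1⟩
    · apply Finset.union_subset
      · apply Finset.image_subset_image
        intro n hn
        simp only [Finset.mem_Icc] at hn ⊢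
        omega
      · intro q hq
        simp only [hB, Finset.mem_Icc] at hq
        obtain ⟨hq1, hqM⟩ := hq
        have hq0 : (0:ℝ) < (q:ℝ) := by exact_mod_cast hq1
        have hqM' : (q:ℝ) ≤ M := by exact_mod_cast hqM
        have hqx : (q:ℝ) * ((N:ℝ)+1) ≤ x := by nlinarith
        have hdivq : ((N:ℝ)+1) ≤ x / (q:ℝ) := by rw [le_div_iff₀ hq0]; nlinarith
        set m := ⌊x / (q:ℝ)⌋₊ with hm
        have hmN : N + 1 ≤ m := Nat.le_floor (by push_cast; linarith)
        have hqN : q ≤ N := le_trans hqM hMN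
        have hqm : q < m := by omega
        have hqm' : (q:ℝ) < (m:ℝ) := by exact_mod_cast hqm
        have hq1' : (1:ℝ) ≤ (q:ℝ) := by exact_mod_cast hq1
        have hm0 : (0:ℝ) < (m:ℝ) := by exact_mod_cast (show 0 < m by omega)
        have hmlex : (m:ℝ) ≤ x / (q:ℝ) := Nat.floor_le (by positivity)
        have hmgt : x / (q:ℝ) < (m:ℝ) + 1 := Nat.lt_floor_add_one _
        have hmx : m ≤ ⌊x⌋₊ := by
          apply Nat.le_floor
          have : x / (q:ℝ) ≤ x := by
            rw [div_le_iff₀ hq0]; nlinarith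
          linarith
        simp only [Finset.mem_image, Finset.mem_Icc]
        refine ⟨m, ⟨by omega, hmx⟩, ?_⟩
        have hub : f m < q + 1 := by
          rw [hf]
          apply (Nat.floor_lt (by positivity)).mpr
          rw [div_lt_iff₀ hm0]
          push_cast
          have h1 : x < ((m:ℝ)+1) * q := by
            rw [div_lt_iff₀ hq0] at hmgt; linarith [hmgt]
          nlinarith
        have hlb : q ≤ f m := by
          apply Nat.le_floor
          rw [le_div_iff₀ hm0]
          rw [le_div_iff₀ hq0] at hmlex
          linarith
        omega
  -- cardinalities
  have hcardA : A.card = N := by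
    rw [hA, Finset.card_image_of_injOn, Nat.card_Icc]
    · omega
    · intro a ha b hb hab
      simp only [Finset.coe_Icc, Set.mem_Icc] at ha hb
      by_contra hne
      rcases lt_or_gt_of_ne hne with h | h
      · exact absurd hab (by have := fanti a b ha.1 h hb.2; omega)
      · exact absurd hab (by have := fanti b a hb.1 h ha.2; omega)
  have hcardB : B.card = M := by rw [hB, Nat.card_Icc]; omega
  have hcard : ((Finset.Icc 1 ⌊x⌋₊).image f).card = N + M := by
    rw [himage, Finset.card_union_of_disjoint hdisj, hcardA, hcardB]
  rw [hcard]
  -- final arithmetic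
  have hub : (N:ℝ) + M ≤ 2 * s := by nlinarith
  have hlb : 2 * s - 2 < (N:ℝ) + M := by nlinarith [sq_nonneg ((N:ℝ) + 1 - s)]
  rw [abs_le]
  constructor <;> push_cast <;> linarith
end

section
/- Let x ≥ 3 be real, q a positive integer with q ≤ x, and a an integer with 1 ≤ a ≤ q. Then the sum over integers d with (√x − a)/q < d ≤ (x/q)^{2/3} of (x/(dq+a) − x/(dq+a+1)) equals √x/q + O((x/q⁴)^{1/3} + 1). -/
open Finset in
lemma tel_sum' (f : ℕ → ℝ) (m n : ℕ) (h : m ≤ n + 1) :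
    ∑ d ∈ Finset.Icc m n, (f d - f (d+1)) = f m - f (n+1) := by
  rw [← Finset.Ico_add_one_right_eq_Icc, Finset.sum_Ico_eq_sum_range]
  have e1 : ∑ k ∈ range (n + 1 - m), (f (m + k) - f (m + k + 1))
      = ∑ k ∈ range (n + 1 - m), ((fun j => f (m + j)) k - (fun j => f (m + j)) (k+1)) :=
    Finset.sum_congr rfl (fun i _ => by simp [Nat.add_assoc])
  rw [e1, Finset.sum_range_sub' (fun j => f (m + j))]
  have : m + (n.succ - m) = n + 1 := by omega
  simp [this]

set_option maxHeartbeats 4000000 in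
open scoped Classical in
theorem S21_asymp :
    ∃ C : ℝ, 0 < C ∧ ∀ (x : ℝ) (q a : ℕ), 3 ≤ x → 1 ≤ q → (q : ℝ) ≤ x →
      1 ≤ a → a ≤ q →
      |(∑ d ∈ (Finset.range (⌊x⌋₊ + 1)).filter
            (fun d : ℕ => (Real.sqrt x - a) / q < (d : ℝ) ∧
              (d : ℝ) ≤ (x / q) ^ ((2 : ℝ) / 3)),
          (x / ((d * q + a : ℕ) : ℝ) - x / ((d * q + a + 1 : ℕ) : ℝ)))
        - Real.sqrt x / q| ≤ C * ((x / (q : ℝ) ^ 4) ^ ((1 : ℝ) / 3) + 1) := by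
  refine ⟨9, by norm_num, ?_⟩
  intro x q a hx hq hqx ha1 haq
  have hq0 : (0:ℝ) < q := by exact_mod_cast hq
  have hq1 : (1:ℝ) ≤ q := by exact_mod_cast hq
  have ha0 : (1:ℝ) ≤ a := by exact_mod_cast ha1
  have haq' : (a:ℝ) ≤ q := by exact_mod_cast haq
  have hx0 : (0:ℝ) < x := by linarith
  set s := Real.sqrt x with hs_def
  have hs0 : 0 < s := Real.sqrt_pos.mpr hx0
  have hs2 : s^2 = x := Real.sq_sqrt hx0.le
  have hs1 : 1 ≤ s := by nlinarith
  have hsx : s ≤ x := by nlinarith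
  have hxq1 : (1:ℝ) ≤ x/q := (one_le_div hq0).mpr hqx
  set D1 := (x/q) ^ ((2:ℝ)/3) with hD1_def
  have hxq0 : (0:ℝ) < x/q := by linarith
  have hD1_pos : 0 < D1 := Real.rpow_pos_of_pos hxq0 _
  have hD1_1 : 1 ≤ D1 := by
    have := Real.rpow_le_rpow_of_exponent_le hxq1 (by norm_num : (0:ℝ) ≤ 2/3)
    rwa [Real.rpow_zero] at this
  have hD1x : D1 ≤ x := by
    calc D1 ≤ (x/q) ^ (1:ℝ) := Real.rpow_le_rpow_of_exponent_le hxq1 (by norm_num)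
    _ = x/q := Real.rpow_one _
    _ ≤ x := by rw [div_le_iff₀ hq0]; nlinarith
  set d1 := ⌊D1⌋₊ with hd1_def
  set m := ⌊s⌋₊ with hm_def
  set d0 := (m + 1 - a + (q - 1)) / q with hd0_def
  -- characterization of the lower cutoff
  have hchar : ∀ d : ℕ, ((s - a)/q < d ↔ d0 ≤ d) := by
    intro d
    rw [div_lt_iff₀ hq0, sub_lt_iff_lt_add]
    have c1 : (s < (d:ℝ)*q + a) ↔ m < d*q + a := by
      rw [hm_def, hs_def,
        show ((d:ℝ)*(q:ℝ) + (a:ℝ)) = ((d*q+a : ℕ):ℝ) from by push_cast; ring]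
      exact (Nat.floor_lt (Real.sqrt_nonneg x)).symm
    rw [c1, hd0_def, Nat.div_le_iff_le_mul_add_pred hq, Nat.mul_comm q d]
    set k := d * q with hk
    omega
  have hset : (Finset.range (⌊x⌋₊ + 1)).filter
      (fun d : ℕ => (s - a) / q < (d : ℝ) ∧ (d : ℝ) ≤ D1)
      = Finset.Icc d0 d1 := by
    ext d
    simp only [Finset.mem_filter, Finset.mem_range, Finset.mem_Icc]
    have e1 : ((d:ℝ) ≤ D1) ↔ d ≤ d1 := (Nat.le_floor_iff hD1_pos.le).symm
    have e2 : d1 ≤ ⌊x⌋₊ := Nat.floor_le_floor hD1x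
    constructor
    · rintro ⟨_, h2, h3⟩
      exact ⟨(hchar d).mp h2, e1.mp h3⟩
    · rintro ⟨h1, h2⟩
      exact ⟨by omega, (hchar d).mpr h1, e1.mpr h2⟩
  rw [hset]
  have hnn : (0:ℝ) ≤ (x / (q:ℝ)^4) ^ ((1:ℝ)/3) := Real.rpow_nonneg (by positivity) _
  rcases lt_or_ge d1 d0 with hlt | hle
  · -- empty case
    rw [Finset.Icc_eq_empty (by omega), Finset.sum_empty, zero_sub, abs_neg,
      abs_of_pos (by positivity)]
    have h1 : (d1:ℝ) ≤ (s - a)/q := by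
      by_contra hcon
      push_neg at hcon
      exact absurd ((hchar d1).mp hcon) (by omega)
    have h2 : D1 < (d1:ℝ) + 1 := Nat.lt_floor_add_one D1
    have hD1sq : D1 ≤ s/q + 1 := by
      have : (s - a)/q ≤ s/q := (div_le_div_iff_of_pos_right hq0).mpr (by linarith)
      linarith
    have hsq9 : s/q ≤ 9 := by
      by_contra hcon
      push_neg at hcon
      have ht1 : 1 ≤ s/q := by linarith
      have h2t : D1 ≤ 2*(s/q) := by linarith
      have hcube : D1^(3:ℕ) = (x/q)^(2:ℕ) := by
        rw [hD1_def, ← Real.rpow_natCast ((x/q) ^ ((2:ℝ)/3)) 3, ← Real.rpow_mul hxq0.le,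
          ← Real.rpow_natCast (x/q) 2]
        norm_num
      have h3' : D1^(3:ℕ) ≤ (2*(s/q))^(3:ℕ) := pow_le_pow_left₀ hD1_pos.le h2t 3
      have key : (x/q)^(2:ℕ) = (s/q)^(3:ℕ)*(s*q) := by
        rw [← hs2]; field_simp
      have h8 : (2*(s/q))^(3:ℕ) = 8*(s/q)^(3:ℕ) := by ring
      have hsq_pos : 0 < (s/q)^(3:ℕ) := by positivity
      have hmul : (s/q)^(3:ℕ)*(s*q) ≤ (s/q)^(3:ℕ)*8 := by
        have e : (8:ℝ)*(s/q)^(3:ℕ) = (s/q)^(3:ℕ)*8 := by ring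
        linarith [key, hcube, h3', h8]
      have hsq8 : s*q ≤ 8 := le_of_mul_le_mul_left hmul hsq_pos
      have hd1 : s/q ≤ s := div_le_self hs0.le hq1
      have hd2 : s ≤ s*q := by nlinarith
      linarith
    linarith
  · -- main case
    set F : ℕ → ℝ := fun d => x / (q * ((d:ℝ)*q + a)) with hF_def
    set v : ℕ → ℝ := fun d => s + (d:ℝ)*q with hv_def
    set G : ℕ → ℝ := fun d => 8*x*(1/(v d)^2) with hG_def
    set r : ℕ → ℝ := fun d =>
      x*((q:ℝ)-1) / (((d:ℝ)*q+a) * (((d:ℝ)*q+a)+1) * (((d:ℝ)*q+a)+q)) with hr_def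
    have hu_pos : ∀ d : ℕ, (0:ℝ) < (d:ℝ)*q + a := by
      intro d
      have : (0:ℝ) ≤ (d:ℝ)*q := by positivity
      linarith
    have hv_pos : ∀ d : ℕ, 0 < v d := by
      intro d
      have : (0:ℝ) ≤ (d:ℝ)*q := by positivity
      simp only [hv_def]; linarith
    -- identity per term
    have hterm : ∀ d ∈ Finset.Icc d0 d1,
        x / ((d * q + a : ℕ) : ℝ) - x / ((d * q + a + 1 : ℕ) : ℝ)
          = (F d - F (d+1)) + r d := by
      intro d _
      have hu := hu_pos d
      have h1 : (0:ℝ) < (d:ℝ)*q + a + 1 := by linarith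
      have h2 : (0:ℝ) < (d:ℝ)*q + a + q := by linarith
      have h3 : (0:ℝ) < ((d:ℝ)+1)*q + a := by nlinarith
      simp only [hF_def, hr_def]
      push_cast
      field_simp
      ring
    rw [Finset.sum_congr rfl hterm, Finset.sum_add_distrib,
      tel_sum' F d0 d1 (by omega)]
    -- bounds on the error sum
    have hr_nonneg : ∀ d ∈ Finset.Icc d0 d1, 0 ≤ r d := by
      intro d _
      have hu := hu_pos d
      simp only [hr_def]
      have h1 : (0:ℝ) < (d:ℝ)*q + a + 1 := by linarith
      have h2 : (0:ℝ) < (d:ℝ)*q + a + q := by linarith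
      apply div_nonneg (by nlinarith) (by positivity)
    have hr_le : ∀ d ∈ Finset.Icc d0 d1, r d ≤ G d - G (d+1) := by
      intro d hd
      have hu := hu_pos d
      have hs_lt : s < (d:ℝ)*q + a := by
        have := (hchar d).mpr (Finset.mem_Icc.mp hd).1
        rw [div_lt_iff₀ hq0] at this; linarith
      have hA := hv_pos d
      have hB := hv_pos (d+1)
      have hAB : v (d+1) = v d + q := by simp only [hv_def]; push_cast; ring
      have hvd : v d = s + (d:ℝ)*q := by simp only [hv_def]
      have c1 : v d ≤ 2*((d:ℝ)*q+a) := by rw [hvd]; linarith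
      have c2 : v d ≤ 2*(((d:ℝ)*q+a)+1) := by linarith
      have c3 : v (d+1) ≤ 2*(((d:ℝ)*q+a)+q) := by rw [hAB]; linarith
      have hm1 : v d * v d ≤ (2*((d:ℝ)*q+a))*(2*(((d:ℝ)*q+a)+1)) :=
        mul_le_mul c1 c2 hA.le (by positivity)
      have hm2 : (v d * v d) * v (d+1)
          ≤ ((2*((d:ℝ)*q+a))*(2*(((d:ℝ)*q+a)+1))) * (2*(((d:ℝ)*q+a)+q)) :=
        mul_le_mul hm1 c3 hB.le (by positivity)
      have hden : (v d)^2 * v (d+1)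
          ≤ 8*((((d:ℝ)*q+a))*((((d:ℝ)*q+a))+1)*((((d:ℝ)*q+a))+q)) := by nlinarith [hm2]
      have hP : (0:ℝ) ≤ (v d)^2 * v (d+1) := by positivity
      have hdenpos : (0:ℝ) < (((d:ℝ)*q+a))*((((d:ℝ)*q+a))+1)*((((d:ℝ)*q+a))+q) := by
        have h1 : (0:ℝ) < (d:ℝ)*q + a + 1 := by linarith
        have h2 : (0:ℝ) < (d:ℝ)*q + a + q := by linarith
        positivity
      have step1 : r d ≤ 8*x*q / ((v d)^2 * v (d+1)) := by
        simp only [hr_def]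
        rw [div_le_div_iff₀ hdenpos (by positivity)]
        calc x*((q:ℝ)-1) * ((v d)^2 * v (d+1)) ≤ x*q*((v d)^2 * v (d+1)) := by nlinarith
          _ ≤ x*q*(8*((((d:ℝ)*q+a))*((((d:ℝ)*q+a))+1)*((((d:ℝ)*q+a))+q))) := by
              have := mul_le_mul_of_nonneg_left hden (by positivity : (0:ℝ) ≤ x*q)
              linarith
          _ = 8*x*q*((((d:ℝ)*q+a))*((((d:ℝ)*q+a))+1)*((((d:ℝ)*q+a))+q)) := by ring
      have step2 : 8*x*q / ((v d)^2 * v (d+1)) ≤ G d - G (d+1) := by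
        simp only [hG_def]
        have hident : 8*x*(1/(v d)^2) - 8*x*(1/(v (d+1))^2) - 8*x*q/((v d)^2 * v (d+1))
            = 8*x*(q*(v d)) / ((v d)^2 * (v (d+1))^2) := by
          rw [hAB]
          have hne1 : v d ≠ 0 := hA.ne'
          have hne2 : v d + q ≠ 0 := by positivity
          field_simp
          ring
        have hpos : 0 ≤ 8*x*(q*(v d)) / ((v d)^2 * (v (d+1))^2) := by positivity
        linarith [hident, hpos]
      linarith
    have hE_ub : ∑ d ∈ Finset.Icc d0 d1, r d ≤ 8 := by
      calc ∑ d ∈ Finset.Icc d0 d1, r d ≤ ∑ d ∈ Finset.Icc d0 d1, (G d - G (d+1)) :=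
            Finset.sum_le_sum hr_le
        _ = G d0 - G (d1+1) := tel_sum' G d0 d1 (by omega)
        _ ≤ G d0 := by
            have h0 : 0 ≤ G (d1+1) := by
              have := hv_pos (d1+1)
              simp only [hG_def]; positivity
            linarith
        _ ≤ 8 := by
            simp only [hG_def]
            have hA := hv_pos d0
            have hvs : s ≤ v d0 := by
              simp only [hv_def]
              have : (0:ℝ) ≤ (d0:ℝ)*q := by positivity
              linarith
            rw [show (8:ℝ)*x*(1/(v d0)^2) = 8*x/(v d0)^2 by ring,
              div_le_iff₀ (by positivity)]
            nlinarith
    have hE_lb : 0 ≤ ∑ d ∈ Finset.Icc d0 d1, r d := Finset.sum_nonneg hr_nonneg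
    -- bounds on F d0
    have hU_lt : s < (d0:ℝ)*q + a := by
      have := (hchar d0).mpr le_rfl
      rw [div_lt_iff₀ hq0] at this; linarith
    have hU_ub : (d0:ℝ)*q + a ≤ s + q := by
      rcases Nat.eq_zero_or_pos d0 with h0 | h0
      · rw [h0]; push_cast; linarith
      · have hne : ¬ ((s - a)/q < ((d0-1 : ℕ) : ℝ)) := by
          intro hcon
          have := (hchar (d0-1)).mp hcon
          omega
        push_neg at hne
        have hcast : ((d0-1 : ℕ) : ℝ) = (d0:ℝ) - 1 := by
          have : (1:ℕ) ≤ d0 := h0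
          push_cast [Nat.cast_sub this]
          ring
        rw [hcast, le_div_iff₀ hq0] at hne
        nlinarith
    have hU := hu_pos d0
    have hF0_ub : F d0 ≤ s/q := by
      simp only [hF_def]
      rw [div_le_div_iff₀ (by positivity) hq0]
      nlinarith [mul_pos hq0 (mul_pos hs0 (sub_pos.mpr hU_lt))]
    have hF0_lb : s/q - 1 ≤ F d0 := by
      simp only [hF_def]
      rw [sub_le_iff_le_add, div_le_iff₀ hq0]
      have h2 : (x / (q * ((d0:ℝ)*q + a)) + 1) * q = x/((d0:ℝ)*q+a) + q := by
        field_simp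
      rw [h2]
      have h3 : s - q ≤ x/((d0:ℝ)*q+a) := by
        rcases le_or_gt s (q:ℝ) with hc | hc
        · have : (0:ℝ) ≤ x/((d0:ℝ)*q+a) := by positivity
          linarith
        · rw [le_div_iff₀ hU]
          nlinarith
      linarith
    -- bounds on F (d1+1)
    have hd1b : D1 < (d1:ℝ) + 1 := Nat.lt_floor_add_one D1
    have hV := hu_pos (d1+1)
    have hF1_lb : 0 ≤ F (d1+1) := by
      simp only [hF_def]; positivity
    have hF1_ub : F (d1+1) ≤ (x / (q:ℝ)^4) ^ ((1:ℝ)/3) := by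
      have hVb : q*(D1*q) ≤ q*(((d1+1 : ℕ):ℝ)*q + a) := by
        push_cast
        have h1 : D1*q ≤ ((d1:ℝ)+1)*q := mul_le_mul_of_nonneg_right hd1b.le hq0.le
        have h2 : ((d1:ℝ)+1)*q ≤ ((d1:ℝ)+1)*q + a := by linarith
        exact mul_le_mul_of_nonneg_left (le_trans h1 h2) hq0.le
      have h1 : F (d1+1) ≤ x / (q*(D1*q)) := by
        simp only [hF_def]
        exact div_le_div_of_nonneg_left hx0.le (by positivity) hVb
      have h2 : (x/q) ^ ((1:ℝ)/3) * D1 = x/q := by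
        rw [hD1_def, ← Real.rpow_add hxq0]
        norm_num
      have h3 : x / (q*(D1*q)) = (x/q) ^ ((1:ℝ)/3) / q := by
        rw [div_eq_div_iff (by positivity) hq0.ne',
          show (x/q) ^ ((1:ℝ)/3) * (q*(D1*q)) = ((x/q) ^ ((1:ℝ)/3) * D1)*(q*q) from by ring,
          h2]
        field_simp
      have h4 : (x / (q:ℝ)^4) ^ ((1:ℝ)/3) = (x/q) ^ ((1:ℝ)/3) / q := by
        have e0 : x/(q:ℝ)^4 = (x/q)/(q:ℝ)^3 := by
          rw [div_div]; ring_nf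
        rw [e0, Real.div_rpow hxq0.le (by positivity),
          ← Real.rpow_natCast (q:ℝ) 3, ← Real.rpow_mul hq0.le]
        norm_num
      rw [h4, ← h3]
      exact h1
    rw [abs_le]
    constructor <;> linarith
end

section
/- Let x ≥ 1, q a positive integer, and a an integer with 1 ≤ a ≤ q. Then S(x;q,a) = Σ_{0 ≤ d ≤ (x−a)/q} 𝟙(⌊x/(dq+a)⌋ − ⌊x/(dq+a+1)⌋ > 0) + O(1), where the O(1) is bounded by an absolute constant. -/
/-- If `m ≥ 1`, `m % q = a % q` with `1 ≤ a ≤ q`, then `a ≤ m`. -/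
lemma S_aux_le_of_mod (q a m : ℕ) (ha : 1 ≤ a) (haq : a ≤ q) (hm : 1 ≤ m)
    (h : m % q = a % q) : a ≤ m := by
  by_contra hlt
  push_neg at hlt
  have hmq : m < q := lt_of_lt_of_le hlt haq
  rw [Nat.mod_eq_of_lt hmq] at h
  rcases Nat.lt_or_ge a q with h1 | h1
  · rw [Nat.mod_eq_of_lt h1] at h; omega
  · have : a = q := le_antisymm haq h1
    subst this
    rw [Nat.mod_self] at h; omega

/-- Membership criterion for the value set of `n ↦ ⌊x/n⌋`. -/
lemma S_aux_mem_iff (x : ℝ) (hx : 1 ≤ x) (m : ℕ) (hm : 1 ≤ m) :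
    m ∈ (Finset.Icc 1 ⌊x⌋₊).image (fun n : ℕ => ⌊x / (n : ℝ)⌋₊) ↔
      m ≤ ⌊x⌋₊ ∧ ⌊x / ((m : ℝ) + 1)⌋₊ < ⌊x / (m : ℝ)⌋₊ := by
  have hx0 : (0 : ℝ) ≤ x := le_trans zero_le_one hx
  constructor
  · rintro hmem
    rw [Finset.mem_image] at hmem
    obtain ⟨n, hn, hfn⟩ := hmem
    rw [Finset.mem_Icc] at hn
    obtain ⟨hn1, hnF⟩ := hn
    have hn0 : (0 : ℝ) < (n : ℝ) := by exact_mod_cast hn1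
    have hnx : (n : ℝ) ≤ x := by
      calc (n : ℝ) ≤ (⌊x⌋₊ : ℝ) := by exact_mod_cast hnF
        _ ≤ x := Nat.floor_le hx0
    -- m ≤ x/n, so m*n ≤ x
    have h1 : (m : ℝ) ≤ x / n := by rw [← hfn]; exact Nat.floor_le (by positivity)
    have h2 : x / n < (m : ℝ) + 1 := by
      rw [← hfn]; exact Nat.lt_floor_add_one _
    have hmn : (m : ℝ) * n ≤ x := by
      rw [← le_div_iff₀ hn0]; exact h1
    have hxn : x < (n : ℝ) * ((m : ℝ) + 1) := by
      rw [← div_lt_iff₀' hn0]; exact h2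
    have hm0 : (0 : ℝ) < (m : ℝ) := by exact_mod_cast hm
    constructor
    · -- m ≤ ⌊x⌋₊
      apply Nat.le_floor
      calc (m : ℝ) = m * 1 := (mul_one _).symm
        _ ≤ m * n := by
            apply mul_le_mul_of_nonneg_left _ (le_of_lt hm0)
            exact_mod_cast hn1
        _ ≤ x := hmn
    · -- ⌊x/(m+1)⌋ < n ≤ ⌊x/m⌋
      have hA : ⌊x / ((m : ℝ) + 1)⌋₊ < n := by
        rw [Nat.floor_lt (by positivity)]
        rw [div_lt_iff₀ (by positivity)]
        linarith [hxn]
      have hB : n ≤ ⌊x / (m : ℝ)⌋₊ := by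
        apply Nat.le_floor
        rw [le_div_iff₀ hm0]
        linarith [hmn]
      exact lt_of_lt_of_le hA hB
  · rintro ⟨hmF, hlt⟩
    have hm0 : (0 : ℝ) < (m : ℝ) := by exact_mod_cast hm
    have hmx : (m : ℝ) ≤ x := le_trans (by exact_mod_cast hmF) (Nat.floor_le hx0)
    set n := ⌊x / (m : ℝ)⌋₊ with hn
    have hn1 : 1 ≤ n := by
      apply Nat.le_floor
      rw [le_div_iff₀ hm0]; push_cast; linarith
    have hn0 : (0 : ℝ) < (n : ℝ) := by exact_mod_cast hn1
    rw [Finset.mem_image]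
    refine ⟨n, ?_, ?_⟩
    · rw [Finset.mem_Icc]
      refine ⟨hn1, ?_⟩
      apply Nat.floor_le_floor
      exact div_le_self hx0 (by exact_mod_cast hm)
    · -- ⌊x/n⌋ = m
      have h1 : (n : ℝ) ≤ x / m := Nat.floor_le (by positivity)
      have h2 : x / ((m : ℝ) + 1) < n := by
        have := Nat.lt_floor_add_one (x / ((m : ℝ) + 1))
        have hle : (⌊x / ((m : ℝ) + 1)⌋₊ : ℝ) + 1 ≤ n := by exact_mod_cast hlt
        linarith
      rw [Nat.floor_eq_iff (by positivity)]
      constructor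
      · rw [le_div_iff₀ hn0]
        rw [le_div_iff₀ hm0] at h1
        linarith
      · rw [div_lt_iff₀ hn0]
        rw [div_lt_iff₀ (by positivity : (0:ℝ) < (m : ℝ) + 1)] at h2
        linarith

lemma S_aux_one_le (x : ℝ) (hx : 1 ≤ x) (m : ℕ)
    (h : m ∈ (Finset.Icc 1 ⌊x⌋₊).image (fun n : ℕ => ⌊x / (n : ℝ)⌋₊)) : 1 ≤ m := by
  have hx0 : (0 : ℝ) ≤ x := le_trans zero_le_one hx
  rw [Finset.mem_image] at h
  obtain ⟨n, hn, hfn⟩ := h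
  rw [Finset.mem_Icc] at hn
  rw [← hfn]
  apply Nat.le_floor
  have hn0 : (0 : ℝ) < (n : ℝ) := by exact_mod_cast hn.1
  rw [le_div_iff₀ hn0]
  push_cast
  rw [one_mul]
  calc (n : ℝ) ≤ (⌊x⌋₊ : ℝ) := by exact_mod_cast hn.2
    _ ≤ x := Nat.floor_le hx0

open scoped Classical in
theorem S_count_formula :
    ∃ C : ℝ, ∀ (x : ℝ) (q a : ℕ), 1 ≤ x → 1 ≤ q → 1 ≤ a → a ≤ q →
      |((((Finset.Icc 1 ⌊x⌋₊).image (fun n : ℕ => ⌊x / (n : ℝ)⌋₊)).filter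
            (fun m : ℕ => m % q = a % q)).card : ℝ)
        - (((Finset.range (⌊x⌋₊ + 1)).filter
            (fun d : ℕ => (d : ℝ) ≤ (x - a) / q ∧
              0 < ⌊x / ((d * q + a : ℕ) : ℝ)⌋₊ - ⌊x / ((d * q + a + 1 : ℕ) : ℝ)⌋₊)).card : ℝ)|
        ≤ C := by
  use 1
  intro x q a hx hq ha haq
  have hx0 : (0 : ℝ) ≤ x := le_trans zero_le_one hx
  have hq0 : (0 : ℝ) < (q : ℝ) := by exact_mod_cast hq
  have hFx : (⌊x⌋₊ : ℝ) ≤ x := Nat.floor_le hx0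
  have hcard :
      (((Finset.Icc 1 ⌊x⌋₊).image (fun n : ℕ => ⌊x / (n : ℝ)⌋₊)).filter
            (fun m : ℕ => m % q = a % q)).card
        = ((Finset.range (⌊x⌋₊ + 1)).filter
            (fun d : ℕ => (d : ℝ) ≤ (x - a) / q ∧
              0 < ⌊x / ((d * q + a : ℕ) : ℝ)⌋₊ - ⌊x / ((d * q + a + 1 : ℕ) : ℝ)⌋₊)).card := by
    apply Finset.card_bij' (i := fun m _ => (m - a) / q) (j := fun d _ => d * q + a)
    · -- hi : image of A lands in B
      intro m hm
      rw [Finset.mem_filter] at hm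
      obtain ⟨hmem, hmod⟩ := hm
      have h1m : 1 ≤ m := S_aux_one_le x hx m hmem
      have ham : a ≤ m := S_aux_le_of_mod q a m ha haq h1m hmod
      obtain ⟨hmF, hlt⟩ := (S_aux_mem_iff x hx m h1m).mp hmem
      have hdvd : q ∣ m - a := (Nat.modEq_iff_dvd' ham).mp hmod.symm
      have hdq : (m - a) / q * q = m - a := Nat.div_mul_cancel hdvd
      have hda : (m - a) / q * q + a = m := by omega
      rw [Finset.mem_filter, Finset.mem_range]
      refine ⟨?_, ?_, ?_⟩
      · have : (m - a) / q ≤ m - a := Nat.div_le_self _ _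
        omega
      · rw [le_div_iff₀ hq0]
        have hmx : (m : ℝ) ≤ x := le_trans (by exact_mod_cast hmF) hFx
        have : (((m - a) / q * q : ℕ) : ℝ) = (m : ℝ) - a := by
          rw [hdq]; push_cast [ham]; ring
        push_cast at this ⊢
        linarith
      · rw [hda]
        have : ((m + 1 : ℕ) : ℝ) = (m : ℝ) + 1 := by push_cast; ring
        rw [this]
        omega
    · -- hj : image of B lands in A
      intro d hd
      rw [Finset.mem_filter] at hd
      obtain ⟨_, hd1, hd2⟩ := hd
      have hmod : (d * q + a) % q = a % q := by rw [Nat.add_comm, Nat.add_mul_mod_self_right]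
      have hmx : ((d * q + a : ℕ) : ℝ) ≤ x := by
        rw [le_div_iff₀ hq0] at hd1
        push_cast
        linarith
      have hmF : d * q + a ≤ ⌊x⌋₊ := Nat.le_floor hmx
      rw [Finset.mem_filter]
      refine ⟨?_, hmod⟩
      apply (S_aux_mem_iff x hx (d * q + a) (by omega)).mpr
      refine ⟨hmF, ?_⟩
      have hcast : ((d * q + a + 1 : ℕ) : ℝ) = ((d * q + a : ℕ) : ℝ) + 1 := by push_cast; ring
      rw [← hcast]
      omega
    · -- left inverse
      intro m hm
      rw [Finset.mem_filter] at hm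
      obtain ⟨hmem, hmod⟩ := hm
      have h1m : 1 ≤ m := S_aux_one_le x hx m hmem
      have ham : a ≤ m := S_aux_le_of_mod q a m ha haq h1m hmod
      have hdvd : q ∣ m - a := (Nat.modEq_iff_dvd' ham).mp hmod.symm
      have hdq : (m - a) / q * q = m - a := Nat.div_mul_cancel hdvd
      omega
    · -- right inverse
      intro d _
      rw [Nat.add_sub_cancel, Nat.mul_div_cancel _ (by omega : 0 < q)]
  rw [hcard, sub_self, abs_zero]
  exact zero_le_one
end
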